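/- Balance lemma (ring-signature instance): let R be a commutative ring and let t, t' be ring terms in n variables with the same set of occurring variables (a balanced equation). Then t and t' evaluate equally under every valuation Fin n → R in R if and only if t and t' evaluate equally under every valuation Fin n → Option R in the ⊥-enlargement of R. -/
import Mathlib


universe u

/-- Ring terms in `n` variables: variables, constants `0` and `1`, negation,
addition and multiplication (no `⊥`, no division). -/
inductive RTerm (n : ℕ) : Type where
  | var : Fin n → RTerm n
  | zero : RTerm n
  | one : RTerm n
  | neg : RTerm n → RTerm n
  | add : RTerm n → RTerm n → RTerm n
  | mul : RTerm n → RTerm n → RTerm n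

namespace RTerm

/-- Evaluation of a ring term in a commutative ring `R` under a valuation
`τ : Fin n → R`. -/
def evalR {n : ℕ} {R : Type u} [CommRing R] (τ : Fin n → R) : RTerm n → R
  | var i => τ i
  | zero => 0
  | one => 1
  | neg t => -(t.evalR τ)
  | add t s => t.evalR τ + s.evalR τ
  | mul t s => t.evalR τ * s.evalR τ

/-- Addition on the `⊥`-enlargement `Option R` of a commutative ring `R`. -/
def bAdd {R : Type u} [CommRing R] : Option R → Option R → Option R
  | some a, some b => some (a + b)
  | _, _ => none

/-- Multiplication on the `⊥`-enlargement `Option R` of a commutative ring `R`. -/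
def bMul {R : Type u} [CommRing R] : Option R → Option R → Option R
  | some a, some b => some (a * b)
  | _, _ => none

/-- Negation on the `⊥`-enlargement `Option R` of a commutative ring `R`. -/
def bNeg {R : Type u} [CommRing R] : Option R → Option R
  | some a => some (-a)
  | none => none

/-- Evaluation of a ring term in the `⊥`-enlargement `Option R` of a commutative
ring `R` under a valuation `σ : Fin n → Option R`. -/
def evalB {n : ℕ} {R : Type u} [CommRing R] (σ : Fin n → Option R) :
    RTerm n → Option R
  | var i => σ i
  | zero => some 0
  | one => some 1
  | neg t => bNeg (t.evalB σ)
  | add t s => bAdd (t.evalB σ) (s.evalB σ)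
  | mul t s => bMul (t.evalB σ) (s.evalB σ)

/-- The set of variables occurring in a ring term. -/
def varSet {n : ℕ} : RTerm n → Finset (Fin n)
  | var i => {i}
  | zero => ∅
  | one => ∅
  | neg t => varSet t
  | add t s => varSet t ∪ varSet s
  | mul t s => varSet t ∪ varSet s

end RTerm

open RTerm in
lemma evalB_some_of {n : ℕ} {R : Type u} [CommRing R] (σ : Fin n → Option R)
    (τ : Fin n → R) (t : RTerm n) (h : ∀ i ∈ varSet t, σ i = some (τ i)) :
    t.evalB σ = some (t.evalR τ) := by
  induction t with
  | var i => exact h i (by simp [varSet])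
  | zero => rfl
  | one => rfl
  | neg t ih =>
    simp only [evalB, evalR, ih (fun i hi => h i hi), bNeg]
  | add t s iht ihs =>
    have ht := iht (fun i hi => h i (by simp [varSet, hi]))
    have hs := ihs (fun i hi => h i (by simp [varSet, hi]))
    simp only [evalB, evalR, ht, hs, bAdd]
  | mul t s iht ihs =>
    have ht := iht (fun i hi => h i (by simp [varSet, hi]))
    have hs := ihs (fun i hi => h i (by simp [varSet, hi]))
    simp only [evalB, evalR, ht, hs, bMul]

open RTerm in
lemma evalB_none_iff {n : ℕ} {R : Type u} [CommRing R] (σ : Fin n → Option R)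
    (t : RTerm n) : t.evalB σ = none ↔ ∃ i ∈ varSet t, σ i = none := by
  induction t with
  | var i => simp [evalB, varSet]
  | zero => simp [evalB, varSet]
  | one => simp [evalB, varSet]
  | neg t ih =>
    simp only [evalB, varSet, ← ih]
    cases t.evalB σ <;> simp [bNeg]
  | add t s iht ihs =>
    simp only [evalB, varSet, Finset.mem_union]
    constructor
    · intro hb
      cases ht : t.evalB σ with
      | none => obtain ⟨i, hi, hni⟩ := iht.mp ht; exact ⟨i, Or.inl hi, hni⟩
      | some a =>
        cases hs : s.evalB σ with
        | none => obtain ⟨i, hi, hni⟩ := ihs.mp hs; exact ⟨i, Or.inr hi, hni⟩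
        | some b => rw [ht, hs] at hb; simp [bAdd] at hb
    · rintro ⟨i, hi | hi, hni⟩
      · rw [iht.mpr ⟨i, hi, hni⟩]; cases s.evalB σ <;> rfl
      · rw [ihs.mpr ⟨i, hi, hni⟩]; cases t.evalB σ <;> rfl
  | mul t s iht ihs =>
    simp only [evalB, varSet, Finset.mem_union]
    constructor
    · intro hb
      cases ht : t.evalB σ with
      | none => obtain ⟨i, hi, hni⟩ := iht.mp ht; exact ⟨i, Or.inl hi, hni⟩
      | some a =>
        cases hs : s.evalB σ with
        | none => obtain ⟨i, hi, hni⟩ := ihs.mp hs; exact ⟨i, Or.inr hi, hni⟩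
        | some b => rw [ht, hs] at hb; simp [bMul] at hb
    · rintro ⟨i, hi | hi, hni⟩
      · rw [iht.mpr ⟨i, hi, hni⟩]; cases s.evalB σ <;> rfl
      · rw [ihs.mpr ⟨i, hi, hni⟩]; cases t.evalB σ <;> rfl

open RTerm in
/-- Balance lemma (ring signature): if the ring terms `t` and `t'` have the same
set of occurring variables, then `t = t'` holds identically in a commutative ring
`R` iff it holds identically in the `⊥`-enlargement of `R`. -/
theorem balance_lemma (n : ℕ) (R : Type u) [CommRing R] (t t' : RTerm n)
    (h : varSet t = varSet t') :
    (∀ τ : Fin n → R, t.evalR τ = t'.evalR τ) ↔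
      (∀ σ : Fin n → Option R, t.evalB σ = t'.evalB σ) := by
  constructor
  · intro hR σ
    by_cases hn : ∃ i ∈ varSet t, σ i = none
    · rw [(evalB_none_iff σ t).mpr hn, Eq.comm, evalB_none_iff]
      rwa [← h]
    · push_neg at hn
      set τ : Fin n → R := fun i => (σ i).getD 0 with hτ
      have hs : ∀ i ∈ varSet t, σ i = some (τ i) := by
        intro i hi
        cases hσ : σ i with
        | none => exact absurd hσ (hn i hi)
        | some a => simp [hτ, hσ]
      rw [evalB_some_of σ τ t hs, evalB_some_of σ τ t' (h ▸ hs), hR τ]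
  · intro hB τ
    have := hB (fun i => some (τ i))
    rw [evalB_some_of _ τ t (fun i _ => rfl),
        evalB_some_of _ τ t' (fun i _ => rfl)] at this
    exact Option.some_injective _ this
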